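/- Let G = (L, R; E) be a finite bipartite graph, let 0 ≤ ε < 1/2, let g ∈ R, and assume the neighbor set Γ(g) ⊆ L is ε-expanding, i.e., |Γ(Γ(g))| ≥ (1−ε)·Σ_{v∈Γ(g)} deg(v). Then the number of constraints h ∈ R with h ≠ g sharing at least two neighbors with g satisfies #{h ∈ R : h ≠ g and |Γ(h) ∩ Γ(g)| ≥ 2} ≤ 2ε·Σ_{v∈Γ(g)} deg(v). Consequently, by removing at most 2ε·Σ_{v∈Γ(g)} deg(v) elements of R other than g, the constraint g becomes isolated, i.e., every remaining h ≠ g satisfies |Γ(h) ∩ Γ(g)| ≤ 1. -/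

import Mathlib

open Finset

/-- The degree of a left vertex `v` in the bipartite graph with edge relation `E`. -/
def bipDeg {L R : Type*} [Fintype R] (E : L → R → Prop) [∀ v w, Decidable (E v w)]
    (v : L) : ℕ :=
  (Finset.univ.filter fun w => E v w).card

/-- The neighbourhood `Γ(S) ⊆ R` of a set `S ⊆ L` of left vertices. -/
def bipNbr {L R : Type*} [Fintype R] (E : L → R → Prop) [∀ v w, Decidable (E v w)]
    (S : Finset L) : Finset R :=
  Finset.univ.filter fun w => ∃ v ∈ S, E v w

/-- The neighbourhood `Γ(g) ⊆ L` of a right vertex (constraint) `g`. -/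
def bipNbrR {L R : Type*} [Fintype L] (E : L → R → Prop) [∀ v w, Decidable (E v w)]
    (g : R) : Finset L :=
  Finset.univ.filter fun v => E v g

/-- In a finite bipartite graph `(L, R; E)`, let `0 ≤ ε < 1/2`, `g ∈ R`,
and assume `Γ(g)` is `ε`-expanding, i.e. `|Γ(Γ(g))| ≥ (1−ε)·Σ_{v∈Γ(g)} deg v`. Then the
number of constraints `h ≠ g` sharing at least two neighbours with `g` is at most
`2ε·Σ_{v∈Γ(g)} deg v`; consequently there is a set `F ⊆ R ∖ {g}` of at most
`2ε·Σ_{v∈Γ(g)} deg v` constraints whose removal isolates `g`: every remaining `h ≠ g`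
satisfies `|Γ(h) ∩ Γ(g)| ≤ 1`. -/
theorem stmt_4 {L R : Type*} [Fintype L] [Fintype R] [DecidableEq L] [DecidableEq R]
    (E : L → R → Prop) [∀ v w, Decidable (E v w)]
    (ε : ℝ) (hε0 : 0 ≤ ε) (hε : ε < 1 / 2) (g : R)
    (hexp : (1 - ε) * ∑ v ∈ bipNbrR E g, (bipDeg E v : ℝ)
        ≤ ((bipNbr E (bipNbrR E g)).card : ℝ)) :
    (((Finset.univ.filter fun h : R =>
        h ≠ g ∧ 2 ≤ ((bipNbrR E h) ∩ (bipNbrR E g)).card).card : ℝ)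
      ≤ 2 * ε * ∑ v ∈ bipNbrR E g, (bipDeg E v : ℝ)) ∧
    ∃ F : Finset R, g ∉ F ∧
      ((F.card : ℝ) ≤ 2 * ε * ∑ v ∈ bipNbrR E g, (bipDeg E v : ℝ)) ∧
      ∀ h : R, h ∉ F → h ≠ g → ((bipNbrR E h) ∩ (bipNbrR E g)).card ≤ 1 := by
  classical
  set S := bipNbrR E g with hS
  set N := bipNbr E S with hN
  set B := N.filter (fun h => 2 ≤ ((bipNbrR E h) ∩ S).card) with hB
  -- double counting
  have hinter : ∀ h : R, (bipNbrR E h) ∩ S = S.filter (fun v => E v h) := by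
    intro h
    ext v
    simp [bipNbrR, Finset.mem_filter, and_comm]
  have hsum : ∑ v ∈ S, bipDeg E v = ∑ h ∈ N, ((bipNbrR E h) ∩ S).card := by
    have h1 : ∑ v ∈ S, bipDeg E v = ∑ h : R, ((bipNbrR E h) ∩ S).card := by
      simp only [bipDeg, Finset.card_filter, hinter]
      rw [Finset.sum_comm]
    rw [h1]
    symm
    apply Finset.sum_subset (Finset.subset_univ N)
    intro h _ hhN
    rw [hinter]
    rw [Finset.card_eq_zero, Finset.filter_eq_empty_iff]
    intro v hv hE
    exact hhN (by simp [hN, bipNbr]; exact ⟨v, hv, hE⟩)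
  -- each term in N is ≥ 1, and ≥ 2 on B
  have hBN : B ⊆ N := Finset.filter_subset _ _
  have hcount : N.card + B.card ≤ ∑ h ∈ N, ((bipNbrR E h) ∩ S).card := by
    have hsplit := Finset.sum_sdiff (f := fun h => ((bipNbrR E h) ∩ S).card) hBN
    have h2 : 2 * B.card ≤ ∑ h ∈ B, ((bipNbrR E h) ∩ S).card := by
      rw [two_mul]
      calc B.card + B.card = ∑ _h ∈ B, 2 := by rw [Finset.sum_const]; ring
        _ ≤ _ := Finset.sum_le_sum (fun h hh => (Finset.mem_filter.mp hh).2)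
    have h1 : (N \ B).card ≤ ∑ h ∈ N \ B, ((bipNbrR E h) ∩ S).card := by
      calc (N \ B).card = ∑ _h ∈ N \ B, 1 := by simp
        _ ≤ _ := by
          apply Finset.sum_le_sum
          intro h hh
          have hhN : h ∈ N := (Finset.mem_sdiff.mp hh).1
          rw [Nat.one_le_iff_ne_zero, Ne, Finset.card_eq_zero,
            ← Finset.not_nonempty_iff_eq_empty, not_not]
          simp only [hN, bipNbr, Finset.mem_filter, Finset.mem_univ, true_and] at hhN
          obtain ⟨v, hv, hE⟩ := hhN
          exact ⟨v, by rw [hinter]; exact Finset.mem_filter.mpr ⟨hv, hE⟩⟩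
    have hcard : (N \ B).card + B.card = N.card := Finset.card_sdiff_add_card_eq_card hBN
    omega
  -- real bound on B.card
  have hDnn : (0:ℝ) ≤ ∑ v ∈ S, (bipDeg E v : ℝ) :=
    Finset.sum_nonneg fun v _ => Nat.cast_nonneg _
  have hBbound : (B.card : ℝ) ≤ ε * ∑ v ∈ S, (bipDeg E v : ℝ) := by
    have hcast : (N.card : ℝ) + B.card ≤ ∑ v ∈ S, (bipDeg E v : ℝ) := by
      have := hcount
      rw [← hsum] at this
      calc (N.card : ℝ) + B.card = ((N.card + B.card : ℕ) : ℝ) := by push_cast; ring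
        _ ≤ ((∑ v ∈ S, bipDeg E v : ℕ) : ℝ) := Nat.cast_le.mpr this
        _ = _ := by push_cast; ring
    nlinarith [hexp]
  -- the target set is a subset of B
  have hsub : (Finset.univ.filter fun h : R =>
      h ≠ g ∧ 2 ≤ ((bipNbrR E h) ∩ (S)).card) ⊆ B := by
    intro h hh
    simp only [Finset.mem_filter, Finset.mem_univ, true_and] at hh
    refine Finset.mem_filter.mpr ⟨?_, hh.2⟩
    have : ((bipNbrR E h) ∩ S).Nonempty := by
      rw [← Finset.card_pos]; omega
    obtain ⟨v, hv⟩ := this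
    rw [hinter] at hv
    simp only [Finset.mem_filter] at hv
    simp only [hN, bipNbr, Finset.mem_filter, Finset.mem_univ, true_and]
    exact ⟨v, hv.1, hv.2⟩
  have hmain : (((Finset.univ.filter fun h : R =>
      h ≠ g ∧ 2 ≤ ((bipNbrR E h) ∩ (S)).card).card : ℝ)
      ≤ 2 * ε * ∑ v ∈ S, (bipDeg E v : ℝ)) := by
    calc (((Finset.univ.filter fun h : R =>
        h ≠ g ∧ 2 ≤ ((bipNbrR E h) ∩ (S)).card).card : ℝ))
        ≤ (B.card : ℝ) := Nat.cast_le.mpr (Finset.card_le_card hsub)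
      _ ≤ ε * ∑ v ∈ S, (bipDeg E v : ℝ) := hBbound
      _ ≤ 2 * ε * ∑ v ∈ S, (bipDeg E v : ℝ) := by nlinarith
  refine ⟨hmain, ⟨Finset.univ.filter fun h : R =>
      h ≠ g ∧ 2 ≤ ((bipNbrR E h) ∩ (S)).card, ?_, hmain, ?_⟩⟩
  · simp
  · intro h hF hne
    simp only [Finset.mem_filter, Finset.mem_univ, true_and, not_and, not_le] at hF
    have := hF hne
    omega
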